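/- arXiv:0706.2987 — 5 statements merged into one kernel-verified Lean document; each statement's English description precedes it below -/
import Mathlib

section
/- Let (b₁,r₁) and (b₂,r₂) be pairs of positive integers with 2b₁ ≤ r₁ and 2b₂ ≤ r₂, and let n ≥ 2. Then Δ^n_{b₁,r₁} + Δ^n_{b₂,r₂} ≥ Δ^n_{b₁+b₂, r₁+r₂}, i.e. the invariant Δ^n does not increase under packing of two single baskets. -/
/-- `Δ^n_{b,r} = i·b·n − r·(i²+i)/2` where `i = ⌊bn/r⌋`, as a rational number. -/
def Delta (b r n : ℕ) : ℚ :=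
  ((b * n / r : ℕ) : ℚ) * b * n
    - (r : ℚ) * (((b * n / r : ℕ) : ℚ) ^ 2 + ((b * n / r : ℕ) : ℚ)) / 2

/-- `Delta b r n` is the maximum of `k ↦ k·b·n − r(k²+k)/2` over naturals `k`. -/
lemma delta_aux (b r n k : ℕ) (hr : 0 < r) :
    (k : ℚ) * b * n - (r : ℚ) * ((k : ℚ) ^ 2 + (k : ℚ)) / 2 ≤ Delta b r n := by
  unfold Delta
  set i : ℕ := b * n / r with hi
  have h1 : i * r ≤ b * n := Nat.div_mul_le_self (b * n) r
  have h2 : b * n < (i + 1) * r := by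
    calc b * n = r * (b * n / r) + b * n % r := (Nat.div_add_mod (b * n) r).symm
      _ < r * (b * n / r) + r := Nat.add_lt_add_left (Nat.mod_lt (b * n) hr) _
      _ = (i + 1) * r := by rw [hi]; ring
  have h1' : (i : ℚ) * r ≤ (b : ℚ) * n := by exact_mod_cast h1
  have h2' : (b : ℚ) * n < ((i : ℚ) + 1) * r := by exact_mod_cast h2
  have hr' : (0 : ℚ) < r := by exact_mod_cast hr
  rcases lt_trichotomy k i with h | h | h
  · have h' : (k : ℚ) + 1 ≤ i := by exact_mod_cast h
    nlinarith [mul_le_mul_of_nonneg_right h1' (by linarith : (0:ℚ) ≤ (i:ℚ) - k),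
      mul_nonneg (mul_nonneg hr'.le (by linarith : (0:ℚ) ≤ (i:ℚ) - k))
        (by linarith : (0:ℚ) ≤ (i:ℚ) - k - 1)]
  · rw [h]
  · have h' : (i : ℚ) + 1 ≤ k := by exact_mod_cast h
    nlinarith [mul_le_mul_of_nonneg_right h2'.le (by linarith : (0:ℚ) ≤ (k:ℚ) - i),
      mul_nonneg (mul_nonneg hr'.le (by linarith : (0:ℚ) ≤ (k:ℚ) - i))
        (by linarith : (0:ℚ) ≤ (k:ℚ) - i - 1)]

/-- The invariant `Δ^n` does not increase under packing of two single baskets: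
`Δ^n_{b₁,r₁} + Δ^n_{b₂,r₂} ≥ Δ^n_{b₁+b₂,r₁+r₂}`. -/
theorem delta_packing_le (b₁ r₁ b₂ r₂ n : ℕ)
    (hb₁ : 0 < b₁) (hb₂ : 0 < b₂) (hr₁ : 0 < r₁) (hr₂ : 0 < r₂)
    (h₁ : 2 * b₁ ≤ r₁) (h₂ : 2 * b₂ ≤ r₂) (hn : 2 ≤ n) :
    Delta (b₁ + b₂) (r₁ + r₂) n ≤ Delta b₁ r₁ n + Delta b₂ r₂ n := by
  set k : ℕ := (b₁ + b₂) * n / (r₁ + r₂) with hk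
  have key : Delta (b₁ + b₂) (r₁ + r₂) n =
      ((k : ℚ) * b₁ * n - (r₁ : ℚ) * ((k : ℚ) ^ 2 + (k : ℚ)) / 2) +
      ((k : ℚ) * b₂ * n - (r₂ : ℚ) * ((k : ℚ) ^ 2 + (k : ℚ)) / 2) := by
    unfold Delta
    rw [← hk]
    push_cast
    ring
  rw [key]
  exact add_le_add (delta_aux b₁ r₁ n k hr₁) (delta_aux b₂ r₂ n k hr₂)
end

section
/- Let (b₁,r₁) and (b₂,r₂) be pairs of positive integers with 2b₁ ≤ r₁, 2b₂ ≤ r₂, and let n ≥ 2. If there exists an integer i with i/n ≤ b₁/r₁ ≤ (i+1)/n and i/n ≤ b₂/r₂ ≤ (i+1)/n, then Δ^n_{b₁,r₁} + Δ^n_{b₂,r₂} = Δ^n_{b₁+b₂, r₁+r₂}. -/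
lemma delta_key (b r n i : ℕ) (hr : 0 < r)
    (hl : (i : ℚ) * r ≤ (b : ℚ) * n) (hu : (b : ℚ) * n ≤ ((i : ℚ) + 1) * r) :
    Delta b r n = (i : ℚ) * b * n - (r : ℚ) * ((i : ℚ) ^ 2 + (i : ℚ)) / 2 := by
  have hlN : i * r ≤ b * n := by exact_mod_cast hl
  have huN : b * n ≤ (i + 1) * r := by exact_mod_cast hu
  have hjl : i ≤ b * n / r := (Nat.le_div_iff_mul_le hr).2 hlN
  have hju : b * n / r ≤ i + 1 := by
    calc b * n / r ≤ ((i + 1) * r) / r := Nat.div_le_div_right huN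
    _ = i + 1 := Nat.mul_div_cancel _ hr
  rcases (show b * n / r = i ∨ b * n / r = i + 1 by omega) with hj | hj
  · simp only [Delta, hj]
  · have h1 : (i + 1) * r ≤ b * n := by
      have := Nat.div_mul_le_self (b * n) r
      rw [hj] at this; linarith
    have heq : b * n = (i + 1) * r := le_antisymm huN h1
    have heqQ : (b : ℚ) * n = ((i : ℚ) + 1) * r := by exact_mod_cast heq
    simp only [Delta, hj]
    push_cast
    nlinarith [heqQ]

/-- If both slopes `b₁/r₁`, `b₂/r₂` lie in a common interval `[i/n, (i+1)/n]`,
then packing preserves `Δ^n`: `Δ^n_{b₁,r₁} + Δ^n_{b₂,r₂} = Δ^n_{b₁+b₂,r₁+r₂}`. -/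
theorem delta_packing_eq (b₁ r₁ b₂ r₂ n : ℕ)
    (hb₁ : 0 < b₁) (hb₂ : 0 < b₂) (hr₁ : 0 < r₁) (hr₂ : 0 < r₂)
    (h₁ : 2 * b₁ ≤ r₁) (h₂ : 2 * b₂ ≤ r₂) (hn : 2 ≤ n)
    (hi : ∃ i : ℤ, (i : ℚ) / n ≤ (b₁ : ℚ) / r₁ ∧ (b₁ : ℚ) / r₁ ≤ ((i : ℚ) + 1) / n ∧
      (i : ℚ) / n ≤ (b₂ : ℚ) / r₂ ∧ (b₂ : ℚ) / r₂ ≤ ((i : ℚ) + 1) / n) :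
    Delta b₁ r₁ n + Delta b₂ r₂ n = Delta (b₁ + b₂) (r₁ + r₂) n := by
  obtain ⟨i, hi1, hi2, hi3, hi4⟩ := hi
  have hnQ : (0 : ℚ) < n := by positivity
  have hr₁Q : (0 : ℚ) < r₁ := by positivity
  have hr₂Q : (0 : ℚ) < r₂ := by positivity
  have hb₁Q : (0 : ℚ) < b₁ := by positivity
  -- i ≥ 0
  have hipos : 0 ≤ i := by
    by_contra h
    push_neg at h
    have : (i : ℚ) + 1 ≤ 0 := by
      have : i + 1 ≤ 0 := by omega
      exact_mod_cast this
    have h1 : ((i : ℚ) + 1) / n ≤ 0 := div_nonpos_of_nonpos_of_nonneg this hnQ.le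
    have h2 : (0 : ℚ) < (b₁ : ℚ) / r₁ := by positivity
    linarith
  set k : ℕ := i.toNat with hk
  have hkQ : (i : ℚ) = (k : ℚ) := by
    have : ((i.toNat : ℤ) : ℚ) = (i : ℚ) := by exact_mod_cast Int.toNat_of_nonneg hipos
    push_cast at this
    exact this.symm
  rw [hkQ] at hi1 hi2 hi3 hi4
  have L1 : (k : ℚ) * r₁ ≤ (b₁ : ℚ) * n := by
    rw [div_le_div_iff₀ hnQ hr₁Q] at hi1; linarith
  have U1 : (b₁ : ℚ) * n ≤ ((k : ℚ) + 1) * r₁ := by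
    rw [div_le_div_iff₀ hr₁Q hnQ] at hi2; linarith
  have L2 : (k : ℚ) * r₂ ≤ (b₂ : ℚ) * n := by
    rw [div_le_div_iff₀ hnQ hr₂Q] at hi3; linarith
  have U2 : (b₂ : ℚ) * n ≤ ((k : ℚ) + 1) * r₂ := by
    rw [div_le_div_iff₀ hr₂Q hnQ] at hi4; linarith
  have L3 : (k : ℚ) * ((r₁ + r₂ : ℕ) : ℚ) ≤ (((b₁ + b₂ : ℕ)) : ℚ) * n := by
    push_cast; linarith
  have U3 : (((b₁ + b₂ : ℕ)) : ℚ) * n ≤ ((k : ℚ) + 1) * ((r₁ + r₂ : ℕ) : ℚ) := by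
    push_cast; linarith
  rw [delta_key b₁ r₁ n k hr₁ L1 U1, delta_key b₂ r₂ n k hr₂ L2 U2,
    delta_key (b₁ + b₂) (r₁ + r₂) n k (by omega) L3 U3]
  push_cast
  ring
end

section
/- Let (b₁,r₁) and (b₂,r₂) be pairs of positive integers with r₁ > 1, r₂ > 1, 2b₁ ≤ r₁, 2b₂ ≤ r₂, and b₁r₂ − b₂r₁ = 1 (a convenient packing). Setting n = r₁ + r₂, one has Δ^n_{b₁+b₂, r₁+r₂} = Δ^n_{b₁,r₁} + Δ^n_{b₂,r₂} − 1. -/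
/-- For a convenient packing (`b₁r₂ − b₂r₁ = 1`) and `n = r₁ + r₂`,
`Δ^n_{b₁+b₂,r₁+r₂} = Δ^n_{b₁,r₁} + Δ^n_{b₂,r₂} − 1`. -/
theorem delta_convenient_packing (b₁ r₁ b₂ r₂ : ℕ)
    (hb₁ : 0 < b₁) (hb₂ : 0 < b₂) (hr₁ : 1 < r₁) (hr₂ : 1 < r₂)
    (h₁ : 2 * b₁ ≤ r₁) (h₂ : 2 * b₂ ≤ r₂)
    (hconv : (b₁ : ℤ) * r₂ - (b₂ : ℤ) * r₁ = 1) :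
    Delta (b₁ + b₂) (r₁ + r₂) (r₁ + r₂)
      = Delta b₁ r₁ (r₁ + r₂) + Delta b₂ r₂ (r₁ + r₂) - 1 := by
  obtain ⟨c, rfl⟩ : ∃ c, b₁ = c + 1 := ⟨b₁ - 1, by omega⟩
  obtain ⟨d, rfl⟩ : ∃ d, r₂ = d + 1 := ⟨r₂ - 1, by omega⟩
  have key : (c + 1) * (d + 1) = b₂ * r₁ + 1 := by
    push_cast at hconv; zify; linarith
  have e0 : (c + 1 + b₂) * (r₁ + (d + 1)) / (r₁ + (d + 1)) = c + 1 + b₂ :=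
    Nat.mul_div_cancel _ (by omega)
  have e1 : (c + 1) * (r₁ + (d + 1)) / r₁ = c + 1 + b₂ := by
    have h : (c + 1) * (r₁ + (d + 1)) = 1 + (c + 1 + b₂) * r₁ := by
      zify; linear_combination (by exact_mod_cast key : ((c:ℤ)+1)*(d+1) = b₂*r₁+1)
    rw [h, Nat.add_mul_div_right _ _ (by omega : 0 < r₁),
      Nat.div_eq_of_lt (by omega)]
    omega
  have e2 : b₂ * (r₁ + (d + 1)) / (d + 1) = c + b₂ := by
    have h : b₂ * (r₁ + (d + 1)) = d + (c + b₂) * (d + 1) := by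
      zify; linear_combination -(by exact_mod_cast key : ((c:ℤ)+1)*(d+1) = b₂*r₁+1)
    rw [h, Nat.add_mul_div_right _ _ (by omega : 0 < d + 1),
      Nat.div_eq_of_lt (by omega)]
    omega
  have keyQ : ((c : ℚ) + 1) * (d + 1) = b₂ * r₁ + 1 := by exact_mod_cast key
  unfold Delta
  rw [e0, e1, e2]
  push_cast
  linear_combination -keyQ
end

section
/- Let S^(n) ⊂ ℚ be the set consisting of all fractions 1/m for m ≥ 2 together with all fractions i/k with 2 ≤ k ≤ n and 2 ≤ i ≤ ⌊k/2⌋ in lowest terms. If q₁/p₁ < q₂/p₂ are two consecutive elements of S^(n) (i.e. no element of S^(n) lies strictly between them), then p₁q₂ − p₂q₁ = 1. -/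
/-- The set `S^(n) = {1/m : m ≥ 2} ∪ {i/k : 5 ≤ k ≤ n, 2 ≤ i ≤ ⌊k/2⌋, gcd(i,k)=1} ⊆ ℚ`. -/
def Sset (n : ℕ) : Set ℚ :=
  {x | ∃ m : ℕ, 2 ≤ m ∧ x = 1 / (m : ℚ)} ∪
    {x | ∃ i k : ℕ, 5 ≤ k ∧ k ≤ n ∧ 2 ≤ i ∧ 2 * i ≤ k ∧ Nat.Coprime i k ∧ x = (i : ℚ) / k}

lemma mem_Sset_of {n : ℕ} {z : ℚ} (h0 : 0 < z) (h2 : z ≤ 1/2)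
    (h : z.num = 1 ∨ z.den ≤ n) : z ∈ Sset n := by
  have hden : (0:ℤ) < (z.den:ℤ) := Int.natCast_pos.mpr z.pos
  have hnum : 0 < z.num := Rat.num_pos.mpr h0
  have hq : z = (z.num : ℚ) / (z.den : ℚ) := (Rat.num_div_den z).symm
  have h2' : 2 * z.num ≤ (z.den : ℤ) := by
    rw [hq] at h2
    rw [div_le_div_iff₀ (by exact_mod_cast hden) (by norm_num)] at h2
    have h2'' : ((2*z.num : ℤ) : ℚ) ≤ (((z.den:ℤ)) : ℚ) := by push_cast; linarith
    exact_mod_cast h2''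
  by_cases h1 : z.num = 1
  · left
    refine ⟨z.den, by omega, ?_⟩
    rw [hq, h1]; norm_num
  · have h1' : 2 ≤ z.num := by omega
    have hd : z.den ≤ n := h.resolve_left h1
    right
    have hna : z.num.natAbs = z.num.toNat := by omega
    refine ⟨z.num.toNat, z.den, ?_, hd, by omega, by omega, ?_, ?_⟩
    · -- 5 ≤ z.den
      by_contra hlt
      have hd4 : z.den = 4 := by omega
      have hn2 : z.num = 2 := by omega
      have := z.reduced
      rw [hn2, hd4] at this
      simp [Nat.Coprime] at this
    · have := z.reduced; rwa [hna] at this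
    · have hcn : ((z.num.toNat : ℕ) : ℚ) = (z.num : ℚ) := by exact_mod_cast Int.toNat_of_nonneg hnum.le
      rw [hcn]; exact hq

lemma Sset_props {n : ℕ} {z : ℚ} (h : z ∈ Sset n) :
    0 < z ∧ z ≤ 1/2 ∧ (z.num = 1 ∨ z.den ≤ n) := by
  rcases h with ⟨m, hm, rfl⟩ | ⟨i, k, hk5, hkn, hi2, hik, hcop, rfl⟩
  · have hm0 : (0:ℚ) < (m:ℚ) := by exact_mod_cast (by omega : 0 < m)
    refine ⟨by positivity, ?_, Or.inl ?_⟩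
    · rw [div_le_div_iff₀ hm0 (by norm_num)]
      push_cast
      have : (2:ℚ) ≤ (m:ℚ) := by exact_mod_cast hm
      linarith
    · have : ((1:ℤ) / (m:ℤ) : ℚ) = 1 / (m:ℚ) := by push_cast; ring
      rw [← this, Rat.num_div_eq_of_coprime (by exact_mod_cast (by omega : 0 < m)) (by
        simp [Int.natAbs_natCast, Nat.coprime_one_left])]
  · have hk0 : (0:ℚ) < (k:ℚ) := by exact_mod_cast (by omega : 0 < k)
    have hi0 : (0:ℚ) < (i:ℚ) := by exact_mod_cast (by omega : 0 < i)
    refine ⟨by positivity, ?_, Or.inr ?_⟩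
    · rw [div_le_div_iff₀ hk0 (by norm_num)]
      push_cast
      have : ((2*i:ℕ):ℚ) ≤ ((k:ℕ):ℚ) := by exact_mod_cast hik
      push_cast at this; linarith
    · have hcast : ((i:ℤ) / (k:ℤ) : ℚ) = (i:ℚ) / (k:ℚ) := by push_cast; ring
      have hden : (((i:ℚ)/(k:ℚ)).den : ℤ) = (k:ℤ) := by
        rw [← hcast]
        exact Rat.den_div_eq_of_coprime (by exact_mod_cast (by omega : 0 < k)) (by
          simpa [Int.natAbs_natCast] using hcop)
      have : ((i:ℚ)/(k:ℚ)).den = k := by exact_mod_cast hden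
      omega

lemma den_div_dvd (e f : ℤ) : (((e:ℚ)/(f:ℚ)).den : ℤ) ∣ f := by
  rw [← Rat.divInt_eq_div]; exact Rat.den_dvd e f

lemma caseA (n : ℕ) (x y : ℚ) (hx0 : 0 < x) (hyh : y ≤ 1/2) (hxy : x < y)
    (hxd : x.den ≤ n) (hyd : y.den ≤ n)
    (hcons : ∀ z ∈ Sset n, ¬(x < z ∧ z < y)) :
    (x.den : ℤ) * y.num - (y.den : ℤ) * x.num = 1 := by
  set a := x.num with ha'
  set b := (x.den : ℤ) with hb'
  set c := y.num with hc'
  set d := (y.den : ℤ) with hd'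
  have hb : (0:ℤ) < b := Int.natCast_pos.mpr x.pos
  have hd : (0:ℤ) < d := Int.natCast_pos.mpr y.pos
  have ha : 0 < a := Rat.num_pos.mpr hx0
  have hc : 0 < c := Rat.num_pos.mpr (lt_trans hx0 hxy)
  have hbn : b ≤ (n:ℤ) := by rw [hb']; exact_mod_cast hxd
  have hdn : d ≤ (n:ℤ) := by rw [hd']; exact_mod_cast hyd
  have hbQ : (0:ℚ) < (b:ℚ) := by exact_mod_cast hb
  have hdQ : (0:ℚ) < (d:ℚ) := by exact_mod_cast hd
  have hxq : x = (a:ℚ)/(b:ℚ) := (Rat.num_div_den x).symm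
  have hyq : y = (c:ℚ)/(d:ℚ) := (Rat.num_div_den y).symm
  -- Bezout
  have hg : Int.gcd a b = 1 := by
    have := x.reduced
    simpa [Int.gcd, ha', hb', Int.natAbs_natCast] using this
  obtain ⟨s, t, hst⟩ := Int.isCoprime_iff_gcd_eq_one.mpr hg
  set f : ℤ := (n:ℤ) - ((n:ℤ) + s) % b with hf'
  set e : ℤ := t + a * (((n:ℤ) + s) / b) with he'
  have hrem0 : 0 ≤ ((n:ℤ)+s) % b := Int.emod_nonneg _ (ne_of_gt hb)
  have hremb : ((n:ℤ)+s) % b < b := Int.emod_lt_of_pos _ hb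
  have hfle : f ≤ (n:ℤ) := by omega
  have hfgt : (n:ℤ) - b < f := by omega
  have hf0 : 0 < f := by omega
  have hfQ : (0:ℚ) < (f:ℚ) := by exact_mod_cast hf0
  have hdm := Int.mul_ediv_add_emod ((n:ℤ)+s) b
  have key : b * e - a * f = 1 := by
    rw [he', hf']
    linear_combination hst + a * hdm
  set z : ℚ := (e:ℚ)/(f:ℚ) with hz'
  have hxz : x < z := by
    rw [hxq, hz', div_lt_div_iff₀ hbQ hfQ]
    have : a * f < e * b := by linarith [key]
    exact_mod_cast this
  have hne : ¬ z < y := by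
    intro h
    refine hcons z ?_ ⟨hxz, h⟩
    refine mem_Sset_of (lt_trans hx0 hxz) (le_of_lt (lt_of_lt_of_le h hyh)) (Or.inr ?_)
    have hdvd : ((z.den : ℤ)) ∣ f := den_div_dvd e f
    have : (z.den : ℤ) ≤ f := Int.le_of_dvd hf0 hdvd
    have : (z.den : ℤ) ≤ (n:ℤ) := le_trans this hfle
    exact_mod_cast this
  have hny : ¬ y < z := by
    intro h
    have h1' : c * f + 1 ≤ e * d := by
      rw [hyq, hz', div_lt_div_iff₀ hdQ hfQ] at h
      have : c * f < e * d := by exact_mod_cast h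
      omega
    have h2' : a * d + 1 ≤ c * b := by
      rw [hxq, hyq, div_lt_div_iff₀ hbQ hdQ] at hxy
      have : a * d < c * b := by exact_mod_cast hxy
      omega
    have A : b * (c*f + 1) ≤ b * (e*d) := mul_le_mul_of_nonneg_left h1' hb.le
    have B : f * (a*d + 1) ≤ f * (c*b) := mul_le_mul_of_nonneg_left h2' hf0.le
    have C : d * (b*e - a*f) = d := by rw [key]; ring
    nlinarith [A, B, C, hfgt, hdn]
  have hzy : z = y := le_antisymm (not_lt.mp hny) (not_lt.mp hne)
  have hdf : d ∣ f := by
    have hh : ((z.den : ℤ)) ∣ f := den_div_dvd e f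
    rwa [hzy] at hh
  have hcf : c * f = e * d := by
    have h5 : (c:ℚ)/(d:ℚ) = (e:ℚ)/(f:ℚ) := by rw [← hyq, ← hz', hzy]
    rw [div_eq_div_iff (ne_of_gt hdQ) (ne_of_gt hfQ)] at h5
    exact_mod_cast h5
  obtain ⟨u, hu⟩ := hdf
  have hu0 : 0 < u := by
    rcases mul_pos_iff.mp (hu ▸ hf0) with ⟨_, h⟩ | ⟨h, _⟩
    · exact h
    · linarith
  have he2 : e = c * u := by
    have h6 : (c * u) * d = e * d := by rw [hu] at hcf; linarith [hcf]
    exact (mul_right_cancel₀ (ne_of_gt hd) h6).symm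
  have h7 : u * (b * c - a * d) = 1 := by
    rw [he2, hu] at key
    linear_combination key
  have h8 : u = 1 := Int.eq_one_of_mul_eq_one_right hu0.le h7
  rw [h8, one_mul] at h7
  linarith [h7]

lemma unit_case (n : ℕ) (x y : ℚ) (hx1 : x.num = 1) (hy1 : y.num = 1)
    (hxy : x < y) (hyh : y ≤ 1/2)
    (hcons : ∀ z ∈ Sset n, ¬(x < z ∧ z < y)) :
    (x.den : ℤ) * y.num - (y.den : ℤ) * x.num = 1 := by
  have hbQ : (0:ℚ) < (x.den:ℚ) := by exact_mod_cast x.pos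
  have hdQ : (0:ℚ) < (y.den:ℚ) := by exact_mod_cast y.pos
  have hxq : x = (1:ℚ)/(x.den:ℚ) := by
    rw [← Rat.num_div_den x, hx1]; norm_num
  have hyq : y = (1:ℚ)/(y.den:ℚ) := by
    rw [← Rat.num_div_den y, hy1]; norm_num
  have hyd2 : 2 ≤ y.den := by
    rw [hyq] at hyh
    rw [div_le_div_iff₀ hdQ (by norm_num)] at hyh
    exact_mod_cast (by linarith : (2:ℚ) ≤ (y.den:ℚ))
  have hdlt : y.den < x.den := by
    rw [hxq, hyq, div_lt_div_iff₀ hbQ hdQ] at hxy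
    exact_mod_cast (by linarith : ((y.den:ℕ):ℚ) < ((x.den:ℕ):ℚ))
  have heq : x.den = y.den + 1 := by
    by_contra hne
    have h2 : y.den + 2 ≤ x.den := by omega
    have hz : (1:ℚ)/((y.den+1 : ℕ):ℚ) ∈ Sset n := Or.inl ⟨y.den+1, by omega, rfl⟩
    have htQ : (0:ℚ) < ((y.den+1:ℕ):ℚ) := by exact_mod_cast Nat.succ_pos y.den
    refine hcons _ hz ⟨?_, ?_⟩
    · rw [hxq, div_lt_div_iff₀ hbQ htQ]
      exact_mod_cast (by exact_mod_cast (by omega : 1*(y.den+1) < 1*x.den) :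
        (1:ℚ)*((y.den+1:ℕ):ℚ) < 1*((x.den:ℕ):ℚ))
    · have hgoal : (1:ℚ)/((y.den+1:ℕ):ℚ) < (1:ℚ)/((y.den:ℕ):ℚ) := by
        rw [div_lt_div_iff₀ htQ hdQ]
        exact_mod_cast (by exact_mod_cast (by omega : 1*y.den < 1*(y.den+1)) :
          (1:ℚ)*((y.den:ℕ):ℚ) < 1*((y.den+1:ℕ):ℚ))
      rwa [← hyq] at hgoal
  rw [hx1, hy1, heq]
  push_cast; ring

/-- Farey-neighbour property of `S^(n)`: if `x = q₁/p₁ < y = q₂/p₂` are consecutive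
elements of `S^(n)` (in lowest terms), then `p₁q₂ − p₂q₁ = 1`. -/
theorem Sset_consecutive_det_one (n : ℕ) (x y : ℚ)
    (hx : x ∈ Sset n) (hy : y ∈ Sset n) (hxy : x < y)
    (hcons : ∀ z ∈ Sset n, ¬(x < z ∧ z < y)) :
    (x.den : ℤ) * y.num - (y.den : ℤ) * x.num = 1 := by
  obtain ⟨hx0, hxh, hxc⟩ := Sset_props hx
  obtain ⟨hy0, hyh, hyc⟩ := Sset_props hy
  have hbQ : (0:ℚ) < (x.den:ℚ) := by exact_mod_cast x.pos
  have hdQ : (0:ℚ) < (y.den:ℚ) := by exact_mod_cast y.pos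
  by_cases hy1 : y.num = 1
  · by_cases hx1 : x.num = 1
    · exact unit_case n x y hx1 hy1 hxy hyh hcons
    · have hxd : x.den ≤ n := hxc.resolve_left hx1
      by_cases hyd : y.den ≤ n
      · exact caseA n x y hx0 hyh hxy hxd hyd hcons
      · -- y = 1/y.den with y.den > n, x.num ≥ 2 : contradiction with x < y
        exfalso
        have hxnum2 : 2 ≤ x.num := by
          have : 0 < x.num := Rat.num_pos.mpr hx0
          omega
        have hyx : y < x := by
          rw [← Rat.num_div_den x, ← Rat.num_div_den y, hy1,
            div_lt_div_iff₀ hdQ hbQ]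
          have h1 : (x.den : ℤ) < 2 * (y.den : ℤ) := by
            have : (x.den : ℤ) ≤ (n:ℤ) := by exact_mod_cast hxd
            have : ((n:ℕ) : ℤ) < (y.den : ℤ) := by exact_mod_cast (by omega : n < y.den)
            omega
          have h2 : (1:ℤ) * (x.den:ℤ) < x.num * (y.den:ℤ) := by
            have hyd1 : (1:ℤ) ≤ (y.den:ℤ) := by exact_mod_cast y.pos
            nlinarith
          exact_mod_cast h2
        exact absurd hxy (not_lt.mpr hyx.le)
  · have hyd : y.den ≤ n := hyc.resolve_left hy1
    by_cases hxd : x.den ≤ n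
    · exact caseA n x y hx0 hyh hxy hxd hyd hcons
    · -- x = 1/x.den with x.den > n, y.num ≥ 2 : find 1/t strictly between
      exfalso
      have hx1 : x.num = 1 := hxc.resolve_right hxd
      have hynum2 : 2 ≤ y.num := by
        have : 0 < y.num := Rat.num_pos.mpr hy0
        omega
      have h2y : 2 * y.num ≤ (y.den : ℤ) := by
        rw [← Rat.num_div_den y, div_le_div_iff₀ hdQ (by norm_num)] at hyh
        exact_mod_cast (by push_cast; linarith : ((2*y.num : ℤ):ℚ) ≤ (((y.den:ℤ)):ℚ))
      set c : ℕ := y.num.toNat with hc'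
      set d : ℕ := y.den with hd'
      have hc2 : 2 ≤ c := by omega
      have h2cd : 2 * c ≤ d := by omega
      set t : ℕ := d / c + 1 with ht'
      have hq := Nat.div_add_mod d c
      have hr : d % c < c := Nat.mod_lt _ (by omega)
      have ht3 : 3 ≤ t := by
        have : 2 ≤ d / c := Nat.le_div_iff_mul_le (by omega) |>.mpr (by omega)
        omega
      have htd : t ≤ d := by
        have : d / c ≤ d / 2 := Nat.div_le_div_left hc2 (by omega)
        omega
      have htn : t ≤ n := le_trans htd hyd
      have hdct : d < c * t := by
        have h3 : c * t = c * (d / c) + c := by rw [ht']; ring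
        linarith [h3, hq, hr]
      have htQ : (0:ℚ) < ((t:ℕ):ℚ) := by exact_mod_cast (by omega : 0 < t)
      have hz : (1:ℚ)/((t:ℕ):ℚ) ∈ Sset n := Or.inl ⟨t, by omega, rfl⟩
      refine hcons _ hz ⟨?_, ?_⟩
      · rw [← Rat.num_div_den x, hx1, div_lt_div_iff₀ hbQ htQ]
        have htx : t < x.den := by omega
        have hQ : ((t:ℕ):ℚ) < ((x.den:ℕ):ℚ) := by exact_mod_cast htx
        simpa using hQ
      · rw [← Rat.num_div_den y, div_lt_div_iff₀ htQ hdQ]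
        have hQ : ((d:ℕ):ℚ) < ((c*t:ℕ):ℚ) := by exact_mod_cast hdct
        have hcy : ((c:ℕ):ℚ) = (y.num:ℚ) := by
          have : ((c:ℕ):ℤ) = y.num := by omega
          exact_mod_cast this
        rw [Nat.cast_mul, hcy] at hQ
        simpa using hQ
end

section
/- Let X be a minimal projective 3-fold of general type (so K_X is nef and big) with χ(O_X) = 1. Then for every integer m ≥ 2, P_{m+2}(X) ≥ P_m(X) + P_2(X), where P_k denotes the k-th plurigenus h⁰(X, O_X(kK_X)). -/
/-!
Subtracting Reid's formula for `P_m` and `P_2` from that for `P_{m+2}` leaves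
`(m² + m)K³ − χ + (l(m+2) − l(m) − l(2))`. With `χ = 1` and `K³ > 0` this exceeds `−1`, so
the integer `P_{m+2} − P_m − P_2` is nonnegative once the basket term is. Each point of the
basket contributes `w(mb) + w((m+1)b) − w(b)` to it, where `w(t) = t̄(r − t̄)` on `ℤ/r`; this
is nonnegative because `w` is even and subadditive, so `w(b) ≤ w((m+1)b) + w(−mb)`.
-/

open Finset

def reidWeight {r : ℕ} (t : ZMod r) : ℚ :=
  t.val * (r - t.val)

section reidWeight

variable {r : ℕ} [NeZero r]

theorem reidWeight_neg (t : ZMod r) : reidWeight (-t) = reidWeight t := by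
  rcases eq_or_ne t 0 with rfl | ht
  · rw [neg_zero]
  · have hle : t.val ≤ r := (ZMod.val_lt t).le
    rw [reidWeight, reidWeight, ZMod.neg_val, if_neg ht, Nat.cast_sub hle]
    ring

theorem reidWeight_add_le (s t : ZMod r) : reidWeight (s + t) ≤ reidWeight s + reidWeight t := by
  have hs : (s.val : ℚ) ≤ r := by exact_mod_cast (ZMod.val_lt s).le
  have ht : (t.val : ℚ) ≤ r := by exact_mod_cast (ZMod.val_lt t).le
  unfold reidWeight
  rcases lt_or_ge (s.val + t.val) r with hlt | hge
  · rw [ZMod.val_add_of_lt hlt]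
    push_cast
    nlinarith [mul_nonneg (Nat.cast_nonneg (α := ℚ) s.val) (Nat.cast_nonneg (α := ℚ) t.val)]
  · have hwrap : (s.val : ℚ) + t.val = (s + t).val + r := by
      exact_mod_cast ZMod.val_add_val_of_le hge
    nlinarith [mul_nonneg (sub_nonneg.mpr hs) (sub_nonneg.mpr ht)]

theorem reidWeight_le_add_add (a b : ZMod r) :
    reidWeight b ≤ reidWeight a + reidWeight (a + b) := by
  calc reidWeight b = reidWeight (a + b + -a) := by rw [add_neg_cancel_comm]
    _ ≤ reidWeight (a + b) + reidWeight (-a) := reidWeight_add_le _ _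
    _ = reidWeight a + reidWeight (a + b) := by rw [reidWeight_neg, add_comm]

end reidWeight

def basketTerm (b r j : ℕ) : ℚ :=
  ((j * b % r : ℕ) : ℚ) * ((r : ℚ) - ((j * b % r : ℕ) : ℚ)) / (2 * (r : ℚ))

theorem basketTerm_eq_reidWeight (b r j : ℕ) :
    basketTerm b r j = reidWeight ((j * b : ℕ) : ZMod r) / (2 * r) := by
  rw [basketTerm, reidWeight, ZMod.val_natCast]

theorem basketTerm_one_le (b r a : ℕ) :
    basketTerm b r 1 ≤ basketTerm b r a + basketTerm b r (a + 1) := by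
  rcases Nat.eq_zero_or_pos r with rfl | hr
  · simp [basketTerm]
  · have : NeZero r := NeZero.of_pos hr
    simp only [basketTerm_eq_reidWeight, ← add_div]
    gcongr
    push_cast
    simpa only [one_mul, add_mul] using reidWeight_le_add_add (a * b : ZMod r) b

/-- Reid's correction term `l(m)` of the basket `{(bᵢ, rᵢ)}`. -/
def basketCorrection {ι : Type*} [Fintype ι] (b r : ι → ℕ) (m : ℕ) : ℚ :=
  ∑ i, ∑ j ∈ Icc 1 (m - 1), basketTerm (b i) (r i) j

section basketCorrection

variable {ι : Type*} [Fintype ι] (b r : ι → ℕ)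

theorem basketCorrection_two :
    basketCorrection b r 2 = ∑ i, basketTerm (b i) (r i) 1 := by
  simp [basketCorrection]

theorem basketCorrection_add_two {m : ℕ} (hm : 1 ≤ m) :
    basketCorrection b r (m + 2) =
      basketCorrection b r m + ∑ i, (basketTerm (b i) (r i) m + basketTerm (b i) (r i) (m + 1)) := by
  obtain ⟨k, rfl⟩ : ∃ k, m = k + 1 := ⟨m - 1, by omega⟩
  simp only [basketCorrection, ← sum_add_distrib, Nat.add_sub_cancel]
  refine sum_congr rfl fun i _ => ?_
  rw [show k + 1 + 2 - 1 = k + 1 + 1 by omega, sum_Icc_succ_top (by omega),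
    sum_Icc_succ_top (by omega), add_assoc]

theorem basketCorrection_superadditive {m : ℕ} (hm : 1 ≤ m) :
    basketCorrection b r m + basketCorrection b r 2 ≤ basketCorrection b r (m + 2) := by
  rw [basketCorrection_add_two b r hm, basketCorrection_two]
  gcongr with i
  exact basketTerm_one_le _ _ _

end basketCorrection

def reidMainTerm (K3 χ m : ℚ) : ℚ :=
  (1 / 12) * m * (m - 1) * (2 * m - 1) * K3 - (2 * m - 1) * χ

theorem reidMainTerm_add_two_sub (K3 χ m : ℚ) :
    reidMainTerm K3 χ (m + 2) - reidMainTerm K3 χ m - reidMainTerm K3 χ 2 = (m ^ 2 + m) * K3 - χ := by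
  unfold reidMainTerm
  ring

theorem plurigenus_superadditive_chi_one_general
    (ι : Type) [Fintype ι] (b r : ι → ℕ)
    (K3 : ℚ) (hK3 : 0 < K3) (χ : ℤ) (hχ : χ = 1)
    (P : ℕ → ℤ)
    (hReid : ∀ m : ℕ, 2 ≤ m →
      (P m : ℚ) = (1 / 12) * (m : ℚ) * ((m : ℚ) - 1) * (2 * (m : ℚ) - 1) * K3
        - (2 * (m : ℚ) - 1) * (χ : ℚ)
        + ∑ i, ∑ j ∈ Icc 1 (m - 1),
            ((j * b i % r i : ℕ) : ℚ) * ((r i : ℚ) - ((j * b i % r i : ℕ) : ℚ))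
              / (2 * (r i : ℚ))) :
    ∀ m : ℕ, 2 ≤ m → P m + P 2 ≤ P (m + 2) := by
  intro m hm
  have hP : ∀ n, 2 ≤ n → (P n : ℚ) = reidMainTerm K3 χ n + basketCorrection b r n := hReid
  have hdiff : (P (m + 2) : ℚ) - P m - P 2 = ((m : ℚ) ^ 2 + m) * K3 - 1
      + (basketCorrection b r (m + 2) - basketCorrection b r m - basketCorrection b r 2) := by
    rw [hP (m + 2) (by omega), hP m hm, hP 2 le_rfl, ← reidMainTerm_add_two_sub, hχ]
    push_cast
    ring
  have hbasket := basketCorrection_superadditive b r (m := m) (by omega)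
  have hvol : 0 < ((m : ℚ) ^ 2 + m) * K3 := by positivity
  have hgt : (-1 : ℚ) < ((P (m + 2) - P m - P 2 : ℤ) : ℚ) := by
    push_cast
    linarith
  have : -1 < P (m + 2) - P m - P 2 := by exact_mod_cast hgt
  omega

/-- Let `X` be a minimal projective 3-fold of general type with `χ(O_X) = 1`,
encoded via Reid's plurigenus formula: `X` has positive canonical volume `K³ > 0`,
a basket `{(bᵢ, rᵢ)}` of terminal quotient singularities, and plurigenera
`P m = (1/12)m(m−1)(2m−1)K³ − (2m−1)χ + l(m)` for `m ≥ 2`, where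
`l(m) = Σᵢ Σ_{j=1}^{m−1} jb̄ᵢ(rᵢ − jb̄ᵢ)/(2rᵢ)`. Then `P_{m+2} ≥ P_m + P_2`
for all `m ≥ 2`. -/
theorem plurigenus_superadditive_chi_one
    (ι : Type) [Fintype ι] (b r : ι → ℕ)
    (hb : ∀ i, 0 < b i) (hbr : ∀ i, 2 * b i ≤ r i)
    (hcop : ∀ i, Nat.Coprime (b i) (r i))
    (K3 : ℚ) (hK3 : 0 < K3) (χ : ℤ) (hχ : χ = 1)
    (P : ℕ → ℤ)
    (hReid : ∀ m : ℕ, 2 ≤ m →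
      (P m : ℚ) = (1 / 12) * (m : ℚ) * ((m : ℚ) - 1) * (2 * (m : ℚ) - 1) * K3
        - (2 * (m : ℚ) - 1) * (χ : ℚ)
        + ∑ i, ∑ j ∈ Icc 1 (m - 1),
            ((j * b i % r i : ℕ) : ℚ) * ((r i : ℚ) - ((j * b i % r i : ℕ) : ℚ))
              / (2 * (r i : ℚ))) :
    ∀ m : ℕ, 2 ≤ m → P m + P 2 ≤ P (m + 2) :=
  plurigenus_superadditive_chi_one_general ι b r K3 hK3 χ hχ P hReid
end
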